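/- arXiv:1508.06005 — 2 statements merged into one kernel-verified Lean document; each statement's English description precedes it below -/
import Mathlib

section
/- Minimum extrapolation: if T' ⊆ ℝ^m × ℝ^s satisfies (P1) ray unboundedness ((X,Y) ∈ T' and γ > 0 imply (γX, γY) ∈ T'), (P2) convexity, (P3) monotonicity ((X,Y) ∈ T', X' ≥ X, Y' ≤ Y imply (X',Y') ∈ T'), and (P4) contains every observation (X_j, Y_j), then T' contains every point (X, Y) for which there exists λ ∈ ℝ^n with λ ≥ 0, λ ≠ 0, Σ_j λ_j X_j ≤ X and Y ≤ Σ_j λ_j Y_j. -/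
/-!
Ray unboundedness and convexity make `T'` closed under addition, since `x + y = 2 • (½ • x + ½ • y)`,
so `T'` is a convex cone and contains every combination of the observations with nonnegative,
not all zero, coefficients. Monotonicity then passes from that combination to any point it dominates.
-/

open Finset

section Cone

variable {𝕜 E : Type*}

def Convex.toConvexConeOfSMulMem [Field 𝕜] [LinearOrder 𝕜] [IsStrictOrderedRing 𝕜]
    [AddCommGroup E] [Module 𝕜 E] {s : Set E} (hs : Convex 𝕜 s)
    (hsmul : ∀ x ∈ s, ∀ c : 𝕜, 0 < c → c • x ∈ s) : ConvexCone 𝕜 E where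
  carrier := s
  smul_mem' c hc x hx := hsmul x hx c hc
  add_mem' x hx y hy := by
    have hmid : (2⁻¹ : 𝕜) • x + (2⁻¹ : 𝕜) • y ∈ s :=
      hs hx hy (by norm_num) (by norm_num) (by norm_num)
    simpa [smul_add, smul_smul] using hsmul _ hmid 2 two_pos

variable [Semiring 𝕜] [PartialOrder 𝕜] [AddCommMonoid E] [Module 𝕜 E] {ι : Type*}

theorem ConvexCone.sum_smul_mem (C : ConvexCone 𝕜 E) {t : Finset ι} (ht : t.Nonempty)
    {c : ι → 𝕜} {x : ι → E} (hc : ∀ i ∈ t, 0 < c i) (hx : ∀ i ∈ t, x i ∈ C) :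
    ∑ i ∈ t, c i • x i ∈ C := by
  induction ht using Finset.Nonempty.cons_induction with
  | singleton a => simpa using C.smul_mem (hc a (by simp)) (hx a (by simp))
  | cons a t ha _ ih =>
    simp only [mem_cons, forall_eq_or_imp] at hc hx
    rw [sum_cons]
    exact C.add_mem (C.smul_mem hc.1 hx.1) (ih hc.2 hx.2)

theorem ConvexCone.sum_smul_mem_of_nonneg (C : ConvexCone 𝕜 E) {t : Finset ι}
    {c : ι → 𝕜} {x : ι → E} (hc : ∀ i ∈ t, 0 ≤ c i) (hpos : ∃ i ∈ t, 0 < c i)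
    (hx : ∀ i ∈ t, x i ∈ C) : ∑ i ∈ t, c i • x i ∈ C := by
  classical
  obtain ⟨i₀, hi₀, hci₀⟩ := hpos
  have hsupport : ∑ i ∈ t with 0 < c i, c i • x i = ∑ i ∈ t, c i • x i :=
    sum_filter_of_ne fun i hi hne =>
      (hc i hi).lt_of_ne' fun hzero => hne (by rw [hzero, zero_smul])
  rw [← hsupport]
  exact C.sum_smul_mem ⟨i₀, mem_filter.2 ⟨hi₀, hci₀⟩⟩ (fun i hi => (mem_filter.1 hi).2)
    fun i hi => hx i (mem_filter.1 hi).1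

end Cone

theorem minimum_extrapolation_general
    (n m s : ℕ) (X : Fin n → Fin m → ℝ) (Y : Fin n → Fin s → ℝ)
    (T' : Set ((Fin m → ℝ) × (Fin s → ℝ)))
    (hP1 : ∀ P ∈ T', ∀ γ : ℝ, 0 < γ →
      ((fun i => γ * P.1 i, fun r => γ * P.2 r) ∈ T'))
    (hP2 : ∀ Pt ∈ T', ∀ Pu ∈ T', ∀ μ : ℝ, 0 ≤ μ → μ ≤ 1 →
      ((fun i => μ * Pt.1 i + (1 - μ) * Pu.1 i,
        fun r => μ * Pt.2 r + (1 - μ) * Pu.2 r) ∈ T'))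
    (hP3 : ∀ P ∈ T', ∀ X' : Fin m → ℝ, ∀ Y' : Fin s → ℝ,
      (∀ i, P.1 i ≤ X' i) → (∀ r, Y' r ≤ P.2 r) → (X', Y') ∈ T')
    (hP4 : ∀ j, (X j, Y j) ∈ T') :
    ∀ Xt : Fin m → ℝ, ∀ Yt : Fin s → ℝ,
      (∃ lam : Fin n → ℝ, (∀ j, 0 ≤ lam j) ∧ (∃ j, 0 < lam j) ∧
        (∀ i, ∑ j, lam j * X j i ≤ Xt i) ∧ (∀ r, Yt r ≤ ∑ j, lam j * Y j r)) →
      (Xt, Yt) ∈ T' := by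
  rintro Xt Yt ⟨lam, hlam, ⟨j₀, hj₀⟩, hXt, hYt⟩
  have hconvex : Convex ℝ T' := by
    intro Pt hPt Pu hPu a b ha hb hab
    obtain rfl : b = 1 - a := by linarith
    exact hP2 Pt hPt Pu hPu a ha (by linarith)
  let C := hconvex.toConvexConeOfSMulMem hP1
  have hcomb : ∑ j, lam j • (X j, Y j) ∈ C :=
    C.sum_smul_mem_of_nonneg (fun j _ => hlam j) ⟨j₀, mem_univ _, hj₀⟩ fun j _ => hP4 j
  refine hP3 _ hcomb Xt Yt (fun i => ?_) fun r => ?_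
  · simpa [Prod.fst_sum, Finset.sum_apply] using hXt i
  · simpa [Prod.snd_sum, Finset.sum_apply] using hYt r

/-- Minimum extrapolation: any set `T'` satisfying ray
unboundedness, convexity, monotonicity, and inclusion of the observations
contains every point dominated by a nonnegative, nonzero combination of the
observations. -/
theorem minimum_extrapolation
    (n m s : ℕ) (X : Fin n → Fin m → ℝ) (Y : Fin n → Fin s → ℝ)
    (hX : ∀ j i, 0 ≤ X j i) (hXne : ∀ j, X j ≠ 0)
    (hY : ∀ j r, 0 ≤ Y j r) (hYne : ∀ j, Y j ≠ 0)
    (T' : Set ((Fin m → ℝ) × (Fin s → ℝ)))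
    (hP1 : ∀ P ∈ T', ∀ γ : ℝ, 0 < γ →
      ((fun i => γ * P.1 i, fun r => γ * P.2 r) ∈ T'))
    (hP2 : ∀ Pt ∈ T', ∀ Pu ∈ T', ∀ μ : ℝ, 0 ≤ μ → μ ≤ 1 →
      ((fun i => μ * Pt.1 i + (1 - μ) * Pu.1 i,
        fun r => μ * Pt.2 r + (1 - μ) * Pu.2 r) ∈ T'))
    (hP3 : ∀ P ∈ T', ∀ X' : Fin m → ℝ, ∀ Y' : Fin s → ℝ,
      (∀ i, P.1 i ≤ X' i) → (∀ r, Y' r ≤ P.2 r) → (X', Y') ∈ T')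
    (hP4 : ∀ j, (X j, Y j) ∈ T') :
    ∀ Xt : Fin m → ℝ, ∀ Yt : Fin s → ℝ,
      (∃ lam : Fin n → ℝ, (∀ j, 0 ≤ lam j) ∧ (∃ j, 0 < lam j) ∧
        (∀ i, ∑ j, lam j * X j i ≤ Xt i) ∧ (∀ r, Yt r ≤ ∑ j, lam j * Y j r)) →
      (Xt, Yt) ∈ T' :=
  minimum_extrapolation_general n m s X Y T' hP1 hP2 hP3 hP4
end

section
/- Inclusion of the inefficient DMU₄ changes the super-efficiency ranking: the input-oriented IRS DEA super-efficiency of the target (2, 10) relative to the index set {1, 2, 4}, i.e. inf{θ ∈ ℝ : ∃ λ₁, λ₂, λ₄ ≥ 0, λ₁ + λ₂ + λ₄ ≥ 1, λ₁ + 2λ₂ + 2λ₄ ≤ 2θ, λ₁ + 2λ₂ + 9λ₄ ≥ 10}, equals 10/9; in particular it is strictly less than the super-efficiency 2 of the target (1, 1) relative to {2, 3, 4}, so the priority order of DMU₁ and DMU₃ is reversed by adding DMU₄. -/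
/-! The lower bounds are weak LP duality: for any feasible weights `w`,
`θ x_p ≥ ∑ w_j x_j ≥ (min_j x_j) ∑ w_j ≥ min_j x_j` and
`θ x_p ≥ ∑ w_j x_j ≥ (min_j x_j / y_j) ∑ w_j y_j ≥ (min_j x_j / y_j) y_p`.
For `(2, 10)` against `{1, 2, 4}` the ratio bound gives `10/9`, attained by `10/9 · DMU₄`;
for `(1, 1)` against `{2, 3, 4}` the input bound gives `2`, attained by `DMU₂`. -/

open Finset

def irsFeasibleSet {ι : Type*} [Fintype ι] (x y : ι → ℝ) (xp yp : ℝ) : Set ℝ :=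
  {θ | ∃ w : ι → ℝ, (∀ j, 0 ≤ w j) ∧ 1 ≤ ∑ j, w j ∧
    ∑ j, w j * x j ≤ θ * xp ∧ yp ≤ ∑ j, w j * y j}

section IrsFeasibleSet

variable {ι : Type*} [Fintype ι] {x y : ι → ℝ} {xp yp θ : ℝ}

theorem le_mul_of_mem_irsFeasibleSet {m : ℝ} (hm : 0 ≤ m) (hx : ∀ j, m ≤ x j)
    (hθ : θ ∈ irsFeasibleSet x y xp yp) : m ≤ θ * xp := by
  obtain ⟨w, hw, hsum, hin, -⟩ := hθ
  calc m ≤ m * ∑ j, w j := le_mul_of_one_le_right hm hsum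
    _ = ∑ j, w j * m := by rw [mul_sum]; simp only [mul_comm]
    _ ≤ ∑ j, w j * x j := sum_le_sum fun j _ => mul_le_mul_of_nonneg_left (hx j) (hw j)
    _ ≤ θ * xp := hin

theorem mul_le_mul_of_mem_irsFeasibleSet {r : ℝ} (hr : 0 ≤ r) (hxy : ∀ j, r * y j ≤ x j)
    (hθ : θ ∈ irsFeasibleSet x y xp yp) : r * yp ≤ θ * xp := by
  obtain ⟨w, hw, -, hin, hout⟩ := hθ
  calc r * yp ≤ r * ∑ j, w j * y j := mul_le_mul_of_nonneg_left hout hr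
    _ = ∑ j, w j * (r * y j) := by rw [mul_sum]; congr 1; ext j; ring
    _ ≤ ∑ j, w j * x j := sum_le_sum fun j _ => mul_le_mul_of_nonneg_left (hxy j) (hw j)
    _ ≤ θ * xp := hin

theorem mem_irsFeasibleSet_of_scaled [DecidableEq ι] (k : ι) {t : ℝ} (ht : 1 ≤ t)
    (hin : t * x k ≤ θ * xp) (hout : yp ≤ t * y k) : θ ∈ irsFeasibleSet x y xp yp := by
  refine ⟨Pi.single k t, fun j => ?_, ?_, ?_, ?_⟩
  · rcases eq_or_ne j k with rfl | hj
    · simpa using zero_le_one.trans ht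
    · simp [hj]
  · simpa using ht
  · simpa [Pi.single_apply] using hin
  · simpa [Pi.single_apply] using hout

end IrsFeasibleSet

theorem irsFeasibleSet_vecCons_three (x₀ x₁ x₂ y₀ y₁ y₂ xp yp : ℝ) :
    irsFeasibleSet ![x₀, x₁, x₂] ![y₀, y₁, y₂] xp yp =
      {θ | ∃ a b c : ℝ, 0 ≤ a ∧ 0 ≤ b ∧ 0 ≤ c ∧ 1 ≤ a + b + c ∧
        x₀ * a + x₁ * b + x₂ * c ≤ θ * xp ∧ yp ≤ y₀ * a + y₁ * b + y₂ * c} := by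
  ext θ
  simp only [irsFeasibleSet, Fin.sum_univ_three, Fin.forall_fin_succ, IsEmpty.forall_iff,
    Matrix.cons_val_zero, Matrix.cons_val_one, Matrix.cons_val_two, Matrix.tail_cons,
    Matrix.head_cons, and_true, mul_comm _ (_ : ℝ)]
  constructor
  · rintro ⟨w, ⟨h0, h1, h2⟩, hsum, hin, hout⟩
    exact ⟨w 0, w 1, w 2, h0, h1, h2, hsum, hin, hout⟩
  · rintro ⟨a, b, c, ha, hb, hc, hsum, hin, hout⟩
    exact ⟨![a, b, c], ⟨ha, hb, hc⟩, hsum, hin, hout⟩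

theorem dmu3_vs_124_eq :
    {θ : ℝ | ∃ l₁ l₂ l₄ : ℝ, 0 ≤ l₁ ∧ 0 ≤ l₂ ∧ 0 ≤ l₄ ∧
      1 ≤ l₁ + l₂ + l₄ ∧ l₁ + 2 * l₂ + 2 * l₄ ≤ θ * 2 ∧
      10 ≤ l₁ + 2 * l₂ + 9 * l₄} = irsFeasibleSet ![1, 2, 2] ![1, 2, 9] 2 10 := by
  simp only [irsFeasibleSet_vecCons_three, one_mul]

theorem dmu1_vs_234_eq :
    {θ : ℝ | ∃ l₂ l₃ l₄ : ℝ, 0 ≤ l₂ ∧ 0 ≤ l₃ ∧ 0 ≤ l₄ ∧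
      1 ≤ l₂ + l₃ + l₄ ∧ 2 * l₂ + 2 * l₃ + 2 * l₄ ≤ θ ∧
      1 ≤ 2 * l₂ + 10 * l₃ + 9 * l₄} = irsFeasibleSet ![2, 2, 2] ![2, 10, 9] 1 1 := by
  simp only [irsFeasibleSet_vecCons_three, mul_one]

theorem isLeast_dmu3_vs_124 : IsLeast (irsFeasibleSet ![1, 2, 2] ![1, 2, 9] 2 10) (10 / 9) := by
  constructor
  · exact mem_irsFeasibleSet_of_scaled (t := 10 / 9) 2 (by norm_num) (by simp) (by simp)
  · intro θ hθ
    have := mul_le_mul_of_mem_irsFeasibleSet (r := 2 / 9) (by norm_num)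
      (fun j => by fin_cases j <;> norm_num) hθ
    linarith

theorem isLeast_dmu1_vs_234 : IsLeast (irsFeasibleSet ![2, 2, 2] ![2, 10, 9] 1 1) 2 := by
  constructor
  · exact mem_irsFeasibleSet_of_scaled (t := 1) 0 le_rfl (by simp) (by norm_num)
  · intro θ hθ
    simpa using le_mul_of_mem_irsFeasibleSet (m := 2) zero_le_two
      (fun j => by fin_cases j <;> simp) hθ

/-- Including the inefficient `DMU₄` changes the
super-efficiency ranking: the super-efficiency of `DMU₃ = (2, 10)` relative
to `{DMU₁, DMU₂, DMU₄}` equals `10/9`, which is strictly less than the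
super-efficiency `2` of `DMU₁ = (1, 1)` relative to `{DMU₂, DMU₃, DMU₄}`. -/
theorem irs_superefficiency_reversed_by_dmu4 :
    sInf {θ : ℝ | ∃ l₁ l₂ l₄ : ℝ, 0 ≤ l₁ ∧ 0 ≤ l₂ ∧ 0 ≤ l₄ ∧
      1 ≤ l₁ + l₂ + l₄ ∧ l₁ + 2 * l₂ + 2 * l₄ ≤ θ * 2 ∧
      10 ≤ l₁ + 2 * l₂ + 9 * l₄} = 10 / 9 ∧
    sInf {θ : ℝ | ∃ l₂ l₃ l₄ : ℝ, 0 ≤ l₂ ∧ 0 ≤ l₃ ∧ 0 ≤ l₄ ∧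
      1 ≤ l₂ + l₃ + l₄ ∧ 2 * l₂ + 2 * l₃ + 2 * l₄ ≤ θ ∧
      1 ≤ 2 * l₂ + 10 * l₃ + 9 * l₄} = 2 ∧
    sInf {θ : ℝ | ∃ l₁ l₂ l₄ : ℝ, 0 ≤ l₁ ∧ 0 ≤ l₂ ∧ 0 ≤ l₄ ∧
      1 ≤ l₁ + l₂ + l₄ ∧ l₁ + 2 * l₂ + 2 * l₄ ≤ θ * 2 ∧
      10 ≤ l₁ + 2 * l₂ + 9 * l₄} <
    sInf {θ : ℝ | ∃ l₂ l₃ l₄ : ℝ, 0 ≤ l₂ ∧ 0 ≤ l₃ ∧ 0 ≤ l₄ ∧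
      1 ≤ l₂ + l₃ + l₄ ∧ 2 * l₂ + 2 * l₃ + 2 * l₄ ≤ θ ∧
      1 ≤ 2 * l₂ + 10 * l₃ + 9 * l₄} := by
  rw [dmu3_vs_124_eq, dmu1_vs_234_eq, isLeast_dmu3_vs_124.csInf_eq,
    isLeast_dmu1_vs_234.csInf_eq]
  norm_num
end
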